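/- arXiv:0907.2529 — 2 statements merged into one kernel-verified Lean document; each statement's English description precedes it below -/
import Mathlib

section
/- Every pseudo-algebraically closed field is large: if k is a field such that every geometrically integral k-variety has a k-rational point, then for every geometrically integral k-variety X with a smooth k-point, the set X(k) is Zariski dense in X. -/
open AlgebraicGeometry CategoryTheory Limits

/-!
Every nonempty open subscheme `W` of a geometrically integral `k`-variety `X` is again a
geometrically integral `k`-variety: its base change to `k̄` is an open subscheme of the integral
scheme `X_k̄`, nonempty because `Spec k` is a point. Hence `W` has a `k`-point, which is
a `k`-point of `X` lying in `W`.
-/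

namespace AlgebraicGeometry

/-- The PAC condition, with varieties given as schemes locally of finite type over `k` whose base
change to the algebraic closure is integral. -/
def IsPseudoAlgClosed (k : Type) [Field k] : Prop :=
  ∀ (Y : Scheme) (f : Y ⟶ Spec (CommRingCat.of k)), LocallyOfFiniteType f →
    IsIntegral (pullback f
      (Spec.map (CommRingCat.ofHom (algebraMap k (AlgebraicClosure k))))) →
    ∃ s : Spec (CommRingCat.of k) ⟶ Y, s ≫ f = 𝟙 _

def rationalPoints {k : Type} [Field k] {X : Scheme} (f : X ⟶ Spec (CommRingCat.of k)) :
    Set X :=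
  {x | ∃ t : Spec (CommRingCat.of k) ⟶ X, t ≫ f = 𝟙 _ ∧ x ∈ Set.range t.base}

lemma isIntegral_pullback_comp_of_isOpenImmersion {U X Y Z : Scheme} (i : U ⟶ X)
    [IsOpenImmersion i] (f : X ⟶ Z) (g : Y ⟶ Z) [IsIntegral (pullback f g)]
    [Nonempty ↑(pullback (i ≫ f) g)] : IsIntegral (pullback (i ≫ f) g) :=
  isIntegral_of_isOpenImmersion
    ((pullbackRightPullbackFstIso f g i).inv ≫ pullback.snd i (pullback.fst f g))

lemma IsPseudoAlgClosed.rationalPoints_inter_nonempty {k : Type} [Field k]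
    (hk : IsPseudoAlgClosed k) {X : Scheme} (f : X ⟶ Spec (CommRingCat.of k))
    [LocallyOfFiniteType f]
    [IsIntegral (pullback f
      (Spec.map (CommRingCat.ofHom (algebraMap k (AlgebraicClosure k)))))]
    (W : X.Opens) (hW : (W : Set X).Nonempty) : (rationalPoints f ∩ W).Nonempty := by
  have : Nonempty W := hW.to_subtype
  obtain ⟨t, ht⟩ := hk W.toScheme (W.ι ≫ f) inferInstance
    (isIntegral_pullback_comp_of_isOpenImmersion W.ι f _)
  exact ⟨(t ≫ W.ι).base default, ⟨t ≫ W.ι, by rw [Category.assoc, ht], default, rfl⟩,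
    (t.base default).2⟩

lemma IsPseudoAlgClosed.dense_rationalPoints {k : Type} [Field k] (hk : IsPseudoAlgClosed k)
    {X : Scheme} (f : X ⟶ Spec (CommRingCat.of k)) [LocallyOfFiniteType f]
    [IsIntegral (pullback f
      (Spec.map (CommRingCat.ofHom (algebraMap k (AlgebraicClosure k)))))] :
    Dense (rationalPoints f) :=
  dense_iff_inter_open.mpr fun V hV hne ↦
    Set.inter_comm V _ ▸ hk.rationalPoints_inter_nonempty f ⟨V, hV⟩ hne

end AlgebraicGeometry

theorem stmt_14_general (k : Type) [Field k]
    (hPAC : ∀ (Y : Scheme) (f : Y ⟶ Spec (CommRingCat.of k)),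
      LocallyOfFiniteType f →
      IsIntegral (pullback f
        (Spec.map (CommRingCat.ofHom (algebraMap k (AlgebraicClosure k))))) →
      ∃ s : Spec (CommRingCat.of k) ⟶ Y, s ≫ f = 𝟙 _)
    (X : Scheme) (f : X ⟶ Spec (CommRingCat.of k))
    (hft : LocallyOfFiniteType f)
    (hgi : IsIntegral (pullback f
      (Spec.map (CommRingCat.ofHom (algebraMap k (AlgebraicClosure k))))))
    (s : Spec (CommRingCat.of k) ⟶ X) :
    Dense {x : X | ∃ t : Spec (CommRingCat.of k) ⟶ X,
      t ≫ f = 𝟙 _ ∧ x ∈ Set.range t.base} :=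
  IsPseudoAlgClosed.dense_rationalPoints hPAC f

/-- Every pseudo-algebraically closed field is large: if every geometrically
integral variety over `k` has a `k`-rational point, then for every
geometrically integral `k`-variety `X` with a smooth `k`-point (a `k`-point
landing in a smooth-over-`k` open subscheme `U`), the set of `k`-points of `X`
is Zariski dense. -/
theorem stmt_14 (k : Type) [Field k]
    (hPAC : ∀ (Y : Scheme) (f : Y ⟶ Spec (CommRingCat.of k)),
      LocallyOfFiniteType f →
      IsIntegral (pullback f
        (Spec.map (CommRingCat.ofHom (algebraMap k (AlgebraicClosure k))))) →
      ∃ s : Spec (CommRingCat.of k) ⟶ Y, s ≫ f = 𝟙 _)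
    (X : Scheme) (f : X ⟶ Spec (CommRingCat.of k))
    (hft : LocallyOfFiniteType f)
    (hgi : IsIntegral (pullback f
      (Spec.map (CommRingCat.ofHom (algebraMap k (AlgebraicClosure k))))))
    (s : Spec (CommRingCat.of k) ⟶ X) (hs : s ≫ f = 𝟙 _)
    (U : X.Opens) (hU : IsSmooth (U.ι ≫ f))
    (hsU : Set.range s.base ⊆ (U : Set X)) :
    Dense {x : X | ∃ t : Spec (CommRingCat.of k) ⟶ X,
      t ≫ f = 𝟙 _ ∧ x ∈ Set.range t.base} :=
  stmt_14_general k hPAC X f hft hgi s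
end

section
/- Let q be a prime power and let Y ⊆ P^N over F_q be the common zero locus of a nonzero homogeneous cubic form φ and a nonzero homogeneous quadratic form ψ in F_q[T₀,…,T_N] having no common irreducible factor. Then #Y(F_q) ≤ 12 q^(N-1)/(q−1). -/
open MvPolynomial Finset

set_option linter.unusedSectionVars false

variable {F : Type} [Field F] [Fintype F] [DecidableEq F]




lemma my_eval_smul {n d : ℕ} {p : MvPolynomial (Fin n) F} (hp : p.IsHomogeneous d) (c : F)
    (x : Fin n → F) : eval (c • x) p = c ^ d * eval x p := by
  conv_lhs => rw [← p.support_sum_monomial_coeff]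
  conv_rhs => rw [← p.support_sum_monomial_coeff]
  rw [map_sum, map_sum, Finset.mul_sum]
  refine Finset.sum_congr rfl fun u hu => ?_
  rw [eval_monomial, eval_monomial]
  have hdeg : (u.sum fun _ e => e) = d := by
    have := hp (mem_support_iff.mp hu)
    simpa [Finsupp.weight_apply, Finsupp.sum, Finsupp.linearCombination] using this
  have : (u.prod fun i e => (c • x) i ^ e) = c ^ d * u.prod fun i e => x i ^ e := by
    simp only [Pi.smul_apply, smul_eq_mul, mul_pow]
    rw [Finsupp.prod, Finsupp.prod, Finset.prod_mul_distrib, ← hdeg, Finsupp.sum,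
      Finset.prod_pow_eq_pow_sum]
  rw [this]; ring

lemma my_uni_count (P : Polynomial F) (hP : P ≠ 0) :
    (univ.filter fun t => P.eval t = 0).card ≤ P.natDegree := by
  classical
  have h1 : (univ.filter fun t => P.eval t = 0) ⊆ P.roots.toFinset := by
    intro t ht
    simp only [mem_filter] at ht
    simp [Multiset.mem_toFinset, Polynomial.mem_roots, hP, Polynomial.IsRoot, ht.2]
  calc (univ.filter fun t => P.eval t = 0).card ≤ P.roots.toFinset.card := Finset.card_le_card h1
    _ ≤ Multiset.card P.roots := Multiset.toFinset_card_le _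
    _ ≤ P.natDegree := Polynomial.card_roots' P


set_option maxHeartbeats 1000000 in
lemma my_sz : ∀ (n : ℕ) (p : MvPolynomial (Fin n) F), p ≠ 0 →
    (univ.filter fun v : Fin n → F => eval v p = 0).card * Fintype.card F ≤
      p.totalDegree * (Fintype.card F) ^ n := by
  intro n
  induction n with
  | zero =>
    intro p hp
    have : (univ.filter fun v : Fin 0 → F => eval v p = 0) = ∅ := by
      rw [Finset.filter_eq_empty_iff]
      intro v _
      have hpc : p = C (coeff 0 p) := by
        ext d
        rw [Subsingleton.elim d 0, coeff_C]
        simp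
      rw [hpc, eval_C]
      intro h
      exact hp (by rw [hpc, h, map_zero])
    rw [this]
    simp
  | succ n IH =>
    intro p hp
    set q := Fintype.card F with hq
    set Φ := finSuccEquiv F n p with hΦ
    have hΦ0 : Φ ≠ 0 := by
      intro h
      exact hp ((map_eq_zero_iff _ (finSuccEquiv F n).injective).mp h)
    set k := Φ.natDegree with hk
    set fk := Φ.coeff k with hfk
    have hfk0 : fk ≠ 0 := Polynomial.leadingCoeff_ne_zero.mpr hΦ0
    have hdle : fk.totalDegree + k ≤ p.totalDegree :=
      totalDegree_coeff_finSuccEquiv_add_le p k hfk0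
    set Z := (univ.filter fun v : Fin (n+1) → F => eval v p = 0) with hZ
    set Zf := (univ.filter fun a : Fin n → F => eval a fk = 0) with hZf
    -- fiberwise count
    have hcount : Z.card = ∑ a : Fin n → F, (Z.filter fun v => v ∘ Fin.succ = a).card :=
      Finset.card_eq_sum_card_fiberwise (fun v _ => Finset.mem_univ _)
    -- each fiber injects into univariate zero set
    have hfiber : ∀ a : Fin n → F,
        (Z.filter fun v => v ∘ Fin.succ = a).card ≤
          (univ.filter fun t => (Polynomial.map (eval a) Φ).eval t = 0).card := by
      intro a
      apply Finset.card_le_card_of_injOn (fun v => v 0)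
      · intro v hv
        simp only [Finset.mem_coe, mem_filter, mem_univ, true_and, hZ] at hv ⊢
        have hv2 : v = Fin.cons (v 0) a := by
          funext i
          refine Fin.cases rfl (fun j => ?_) i
          rw [Fin.cons_succ, ← hv.2]; rfl
        rw [← eval_eq_eval_mv_eval', ← hv2, hv.1]
      · intro v hv w hw h
        simp only [coe_filter, Set.mem_setOf_eq] at hv hw
        funext i
        refine Fin.cases h (fun j => ?_) i
        have : v ∘ Fin.succ = w ∘ Fin.succ := by rw [hv.2, hw.2]
        exact congrFun this j
    have hfiber1 : ∀ a : Fin n → F, eval a fk ≠ 0 →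
        (Z.filter fun v => v ∘ Fin.succ = a).card ≤ k := by
      intro a ha
      refine (hfiber a).trans ?_
      have hPa : Polynomial.map (eval a) Φ ≠ 0 := by
        intro h
        apply ha
        rw [hfk, ← coeff_eval_eq_eval_coeff, h, Polynomial.coeff_zero]
      refine (my_uni_count _ hPa).trans ?_
      exact Polynomial.natDegree_map_le
    have hfiber2 : ∀ a : Fin n → F,
        (Z.filter fun v => v ∘ Fin.succ = a).card ≤ q := by
      intro a
      calc (Z.filter fun v => v ∘ Fin.succ = a).card
          ≤ (univ.filter fun t : F => (Polynomial.map (eval a) Φ).eval t = 0).card := hfiber a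
        _ ≤ (univ : Finset F).card := Finset.card_filter_le _ _
        _ = q := rfl
    have hsplit : Z.card ≤ k * q ^ n + q * Zf.card := by
      rw [hcount]
      rw [← Finset.sum_filter_add_sum_filter_not univ (fun a => eval a fk = 0)]
      have h1 : ∑ a ∈ univ.filter (fun a => eval a fk = 0),
          (Z.filter fun v => v ∘ Fin.succ = a).card ≤ q * Zf.card := by
        calc ∑ a ∈ univ.filter (fun a => eval a fk = 0),
            (Z.filter fun v => v ∘ Fin.succ = a).card
            ≤ ∑ _a ∈ Zf, q := Finset.sum_le_sum (fun a _ => hfiber2 a)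
          _ = q * Zf.card := by rw [Finset.sum_const, smul_eq_mul, mul_comm]
      have h2 : ∑ a ∈ univ.filter (fun a => ¬ eval a fk = 0),
          (Z.filter fun v => v ∘ Fin.succ = a).card ≤ k * q ^ n := by
        calc ∑ a ∈ univ.filter (fun a => ¬ eval a fk = 0),
            (Z.filter fun v => v ∘ Fin.succ = a).card
            ≤ ∑ _a ∈ univ.filter (fun a => ¬ eval a fk = 0), k :=
              Finset.sum_le_sum (fun a ha => hfiber1 a (by simpa using (Finset.mem_filter.mp ha).2))
          _ = (univ.filter (fun a => ¬ eval a fk = 0)).card * k := by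
              rw [Finset.sum_const, smul_eq_mul]
          _ ≤ q ^ n * k := by
              apply Nat.mul_le_mul_right
              calc (univ.filter (fun a => ¬ eval a fk = 0)).card
                  ≤ (univ : Finset (Fin n → F)).card := Finset.card_filter_le _ _
                _ = q ^ n := by simp [hq, Fintype.card_fun]
          _ = k * q ^ n := mul_comm _ _
      omega
    have hIH : Zf.card * q ≤ fk.totalDegree * q ^ n := IH fk hfk0
    calc Z.card * q ≤ (k * q ^ n + q * Zf.card) * q := Nat.mul_le_mul_right _ hsplit
      _ = k * q ^ (n+1) + q * (Zf.card * q) := by ring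
      _ ≤ k * q ^ (n+1) + q * (fk.totalDegree * q ^ n) :=
          Nat.add_le_add_left (Nat.mul_le_mul_left _ hIH) _
      _ = (fk.totalDegree + k) * q ^ (n+1) := by ring
      _ ≤ p.totalDegree * q ^ (n+1) := Nat.mul_le_mul_right _ hdle




/-- substitution by a matrix -/
noncomputable def gM (M : Matrix (Fin n) (Fin n) F) : Fin n → MvPolynomial (Fin n) F :=
  fun i => ∑ j, C (M i j) * X j

lemma gM_one : gM (1 : Matrix (Fin n) (Fin n) F) = X := by
  funext i
  rw [gM]
  rw [Finset.sum_eq_single i]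
  · simp [Matrix.one_apply]
  · intro j _ hj
    simp [Matrix.one_apply, (Ne.symm hj)]
  · simp

lemma bind₁_gM (M₁ M₂ : Matrix (Fin n) (Fin n) F) (i : Fin n) :
    bind₁ (gM M₂) (gM M₁ i) = gM (M₁ * M₂) i := by
  rw [gM, gM]
  simp only [map_sum, map_mul, bind₁_C_right, bind₁_X_right, gM, Finset.mul_sum]
  rw [Finset.sum_comm]
  refine Finset.sum_congr rfl fun k _ => ?_
  rw [Matrix.mul_apply, map_sum, Finset.sum_mul]
  refine Finset.sum_congr rfl fun j _ => ?_
  rw [map_mul]; ring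

lemma eval_gM_bind (M : Matrix (Fin n) (Fin n) F) (p : MvPolynomial (Fin n) F)
    (v : Fin n → F) : eval v (bind₁ (gM M) p) = eval (M.mulVec v) p := by
  have h1 : (eval v) ((bind₁ (gM M)) p) = aeval v (bind₁ (gM M) p) := by
    rw [← coe_aeval_eq_eval]; rfl
  rw [h1, aeval_bind₁]
  have h2 : (fun i => aeval v (gM M i)) = M.mulVec v := by
    funext i
    simp [gM, Matrix.mulVec, dotProduct]
  rw [h2, ← coe_aeval_eq_eval]; rfl

lemma gM_isHomogeneous (M : Matrix (Fin n) (Fin n) F) {p : MvPolynomial (Fin n) F} {d : ℕ}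
    (hp : p.IsHomogeneous d) : (bind₁ (gM M) p).IsHomogeneous d := by
  have hg : ∀ i, (gM M i).IsHomogeneous 1 := by
    intro i
    rw [gM]
    apply IsHomogeneous.sum
    intro j _
    exact (isHomogeneous_X _ _).C_mul _
  have := hp.aeval (gM M) hg
  rw [one_mul] at this
  rw [show (bind₁ (gM M)) p = aeval (gM M) p from rfl]
  exact this

/-- The algebra equivalence of `MvPolynomial` induced by a linear automorphism. -/
noncomputable def substEquiv (L : (Fin n → F) ≃ₗ[F] (Fin n → F)) :
    MvPolynomial (Fin n) F ≃ₐ[F] MvPolynomial (Fin n) F := by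
  refine AlgEquiv.ofAlgHom (bind₁ (gM (LinearMap.toMatrix' (L : (Fin n → F) →ₗ[F] Fin n → F))))
    (bind₁ (gM (LinearMap.toMatrix' (L.symm : (Fin n → F) →ₗ[F] Fin n → F)))) ?_ ?_
  all_goals {
    apply algHom_ext
    intro i
    simp only [AlgHom.comp_apply, bind₁_X_right, AlgHom.id_apply]
    rw [bind₁_gM, ← LinearMap.toMatrix'_comp]
    first
      | rw [show ((L.symm : (Fin n → F) →ₗ[F] Fin n → F) ∘ₗ (L : (Fin n → F) →ₗ[F] Fin n → F))
            = LinearMap.id by ext v : 1; simp]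
      | rw [show ((L : (Fin n → F) →ₗ[F] Fin n → F) ∘ₗ (L.symm : (Fin n → F) →ₗ[F] Fin n → F))
            = LinearMap.id by ext v : 1; simp]
    rw [LinearMap.toMatrix'_id, gM_one] }

lemma substEquiv_eval (L : (Fin n → F) ≃ₗ[F] (Fin n → F)) (p : MvPolynomial (Fin n) F)
    (v : Fin n → F) : eval v (substEquiv L p) = eval (L v) p := by
  rw [substEquiv]
  show eval v (bind₁ _ p) = _
  rw [eval_gM_bind]
  congr 1
  rw [← Matrix.toLin'_apply, Matrix.toLin'_toMatrix']
  rfl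

lemma substEquiv_isHomogeneous (L : (Fin n → F) ≃ₗ[F] (Fin n → F)) {p : MvPolynomial (Fin n) F}
    {d : ℕ} (hp : p.IsHomogeneous d) : (substEquiv L p).IsHomogeneous d :=
  gM_isHomogeneous _ hp




noncomputable def shear (f : (Fin n → F) →ₗ[F] F) (a : Fin n → F) (hc : 1 + f a ≠ 0) :
    (Fin n → F) ≃ₗ[F] (Fin n → F) :=
  LinearEquiv.ofLinear (LinearMap.id + LinearMap.smulRight f a)
    (LinearMap.id - (1 + f a)⁻¹ • LinearMap.smulRight f a)
    (by
      refine LinearMap.ext fun y => ?_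
      simp only [LinearMap.comp_apply, LinearMap.add_apply, LinearMap.sub_apply,
        LinearMap.smul_apply, LinearMap.smulRight_apply, LinearMap.id_apply, map_sub, map_smul,
        smul_eq_mul, LinearMap.id_coe, id_eq]
      match_scalars <;> field_simp <;> ring)
    (by
      refine LinearMap.ext fun y => ?_
      simp only [LinearMap.comp_apply, LinearMap.add_apply, LinearMap.sub_apply,
        LinearMap.smul_apply, LinearMap.smulRight_apply, LinearMap.id_apply, map_add, map_smul,
        smul_eq_mul, LinearMap.id_coe, id_eq]
      match_scalars <;> field_simp <;> ring)

lemma exists_linEquiv_single_eq {N : ℕ} (w : Fin (N + 1) → F) (hw : w ≠ 0) :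
    ∃ L : (Fin (N + 1) → F) ≃ₗ[F] (Fin (N + 1) → F), L (Pi.single 0 1) = w := by
  have he0 : ∀ (f : (Fin (N+1) → F) →ₗ[F] F), f (Pi.single 0 1) = 1 → f w ≠ 0 →
      ∃ L : (Fin (N + 1) → F) ≃ₗ[F] (Fin (N + 1) → F), L (Pi.single 0 1) = w := by
    intro f hfe hfw
    have hc : 1 + f (w - Pi.single 0 1) ≠ 0 := by
      rw [map_sub, hfe]
      simpa using hfw
    refine ⟨shear f (w - Pi.single 0 1) hc, ?_⟩
    rw [shear, LinearEquiv.ofLinear_apply]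
    simp only [LinearMap.add_apply, LinearMap.id_apply, LinearMap.smulRight_apply, hfe, one_smul]
    abel
  by_cases h0 : w 0 ≠ 0
  · exact he0 (LinearMap.proj 0) (by simp) h0
  · push_neg at h0
    have : ∃ i, w i ≠ 0 := by
      by_contra h
      push_neg at h
      exact hw (funext h)
    obtain ⟨i₀, hi₀⟩ := this
    have hne : i₀ ≠ 0 := by rintro rfl; exact hi₀ h0
    refine he0 (LinearMap.proj 0 + (w i₀)⁻¹ • LinearMap.proj i₀) ?_ ?_
    · simp [Pi.single_apply, hne, Ne.symm hne]
    · simp only [LinearMap.add_apply, LinearMap.proj_apply, LinearMap.smul_apply, smul_eq_mul, h0,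
        zero_add]
      exact by field_simp; exact one_ne_zero

lemma keyid {F : Type} [Field F] (t f0 f1 f2 f3 c g0 g1 : F)
    (h1 : f3*t^3 + f2*t^2 + f1*t + f0 = 0) (h2 : c*t^2 + g1*t + g0 = 0) :
    (c^2*f1 - c*f3*g0 - c*f2*g1 + f3*g1^2)^2 * g0
      - (c^2*f1 - c*f3*g0 - c*f2*g1 + f3*g1^2) * (c^2*f0 - c*f2*g0 + f3*g1*g0) * g1
      + c * (c^2*f0 - c*f2*g0 + f3*g1*g0)^2 = 0 := by
  set A := c^2*f1 - c*f3*g0 - c*f2*g1 + f3*g1^2 with hA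
  set B := c^2*f0 - c*f2*g0 + f3*g1*g0 with hB
  linear_combination (A^2 + (c*A*t + (A*g1 - c*B)) * (c*f3*t + (c*f2 - f3*g1))) * h2
    - c^2 * (c*A*t + (A*g1 - c*B)) * h1
set_option maxHeartbeats 1600000 in
lemma core {N : ℕ} (φ' ψ' : MvPolynomial (Fin (N + 1)) F)
    (hφh : φ'.IsHomogeneous 3) (hψh : ψ'.IsHomogeneous 2)
    (hcop : ∀ r : MvPolynomial (Fin (N + 1)) F, Irreducible r → ¬(r ∣ φ' ∧ r ∣ ψ'))
    (hφw : eval (Fin.cons 1 0 : Fin (N + 1) → F) φ' ≠ 0)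
    (hψw : eval (Fin.cons 1 0 : Fin (N + 1) → F) ψ' ≠ 0) :
    (univ.filter fun v : Fin (N + 1) → F => eval v φ' = 0 ∧ eval v ψ' = 0).card
      * Fintype.card F ≤ 12 * Fintype.card F ^ N := by
  classical
  set q := Fintype.card F with hqdef
  have hφ0 : φ' ≠ 0 := fun h => hφw (by rw [h, map_zero])
  have hψ0 : ψ' ≠ 0 := fun h => hψw (by rw [h, map_zero])
  set Φ := finSuccEquiv F N φ' with hΦdef
  set Ψ := finSuccEquiv F N ψ' with hΨdef
  have hΦne : Φ ≠ 0 := fun h => hφ0 ((map_eq_zero_iff _ (finSuccEquiv F N).injective).mp h)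
  have hΨne : Ψ ≠ 0 := fun h => hψ0 ((map_eq_zero_iff _ (finSuccEquiv F N).injective).mp h)
  have hΦdeg : Φ.natDegree ≤ 3 := by
    rw [hΦdef, natDegree_finSuccEquiv]
    exact (degreeOf_le_totalDegree _ 0).trans (le_of_eq (hφh.totalDegree hφ0))
  have hΨdeg : Ψ.natDegree ≤ 2 := by
    rw [hΨdef, natDegree_finSuccEquiv]
    exact (degreeOf_le_totalDegree _ 0).trans (le_of_eq (hψh.totalDegree hψ0))
  set f : ℕ → MvPolynomial (Fin N) F := fun i => Φ.coeff i with hfdef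
  set g : ℕ → MvPolynomial (Fin N) F := fun i => Ψ.coeff i with hgdef
  have hfh : ∀ i j, i + j = 3 → (f i).IsHomogeneous j := fun i j h =>
    hφh.finSuccEquiv_coeff_isHomogeneous i j h
  have hgh : ∀ i j, i + j = 2 → (g i).IsHomogeneous j := fun i j h =>
    hψh.finSuccEquiv_coeff_isHomogeneous i j h
  -- top coefficients are constants
  have homog0 : ∀ p : MvPolynomial (Fin N) F, p.IsHomogeneous 0 → p = C (constantCoeff p) := by
    intro p hp
    ext d
    rcases eq_or_ne d 0 with rfl | hd
    · simp [coeff_C, constantCoeff_eq]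
    · rw [hp.coeff_eq_zero (by rwa [Ne, Finsupp.degree_eq_zero_iff]), coeff_C,
        if_neg (Ne.symm hd)]
  set c3 := constantCoeff (f 3) with hc3def
  set c2 := constantCoeff (g 2) with hc2def
  have hf3C : f 3 = C c3 := homog0 _ (hfh 3 0 rfl)
  have hg2C : g 2 = C c2 := homog0 _ (hgh 2 0 rfl)
  -- the values at e₀ pick out the top coefficients
  have heval1 : ∀ (p : MvPolynomial (Fin (N+1)) F) (d : ℕ), p.IsHomogeneous d →
      (finSuccEquiv F N p).natDegree ≤ d →
      eval (Fin.cons 1 0 : Fin (N + 1) → F) p =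
        constantCoeff ((finSuccEquiv F N p).coeff d) := by
    intro p d hp hdeg
    rw [eval_eq_eval_mv_eval']
    rw [Polynomial.eval_eq_sum_range' (lt_of_le_of_lt (Polynomial.natDegree_map_le.trans hdeg)
      (Nat.lt_succ_self d))]
    rw [Finset.sum_range_succ]
    have hz : ∀ i ∈ Finset.range d,
        (Polynomial.map (eval (0 : Fin N → F)) (finSuccEquiv F N p)).coeff i * (1:F) ^ i = 0 := by
      intro i hi
      rw [Finset.mem_range] at hi
      rw [Polynomial.coeff_map]
      have hh := hp.finSuccEquiv_coeff_isHomogeneous i (d - i) (by omega)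
      have h0 : eval (0 : Fin N → F) ((finSuccEquiv F N p).coeff i) = 0 := by
        rw [show (0 : Fin N → F) = fun _ => (0:F) from rfl, eval_zero']
        exact hh.coeff_eq_zero (by simp [map_zero]; omega)
      rw [h0, zero_mul]
    rw [Finset.sum_eq_zero hz, zero_add, Polynomial.coeff_map, one_pow, mul_one,
      show (0 : Fin N → F) = fun _ => (0:F) from rfl, eval_zero']
  have hc3ne : c3 ≠ 0 := fun h => hφw (by rw [heval1 φ' 3 hφh hΦdeg]; exact h)
  have hc2ne : c2 ≠ 0 := fun h => hψw (by rw [heval1 ψ' 2 hψh hΨdeg]; exact h)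
  -- the auxiliary polynomials
  set A : MvPolynomial (Fin N) F :=
    C c2 ^ 2 * f 1 - C c2 * C c3 * g 0 - C c2 * (f 2 * g 1) + C c3 * g 1 ^ 2 with hAdef
  set B : MvPolynomial (Fin N) F :=
    C c2 ^ 2 * f 0 - C c2 * (f 2 * g 0) + C c3 * (g 1 * g 0) with hBdef
  set R : MvPolynomial (Fin N) F := A ^ 2 * g 0 - A * B * g 1 + C c2 * B ^ 2 with hRdef
  -- homogeneity of R
  have hCc2 : (C c2 : MvPolynomial (Fin N) F).IsHomogeneous 0 := isHomogeneous_C _ _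
  have hCc3 : (C c3 : MvPolynomial (Fin N) F).IsHomogeneous 0 := isHomogeneous_C _ _
  have hAh : A.IsHomogeneous 2 := by
    have h1 := hfh 1 2 rfl
    have h2 := hfh 2 1 rfl
    have hg0 := hgh 0 2 rfl
    have hg1 := hgh 1 1 rfl
    exact ((((hCc2.pow 2).mul h1).sub ((hCc2.mul hCc3).mul hg0)).sub
      (hCc2.mul (h2.mul hg1))).add (hCc3.mul (hg1.pow 2))
  have hBh : B.IsHomogeneous 3 := by
    have h0 := hfh 0 3 rfl
    have h2 := hfh 2 1 rfl
    have hg0 := hgh 0 2 rfl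
    have hg1 := hgh 1 1 rfl
    exact (((hCc2.pow 2).mul h0).sub (hCc2.mul (h2.mul hg0))).add (hCc3.mul (hg1.mul hg0))
  have hRh : R.IsHomogeneous 6 := by
    have hg0 := hgh 0 2 rfl
    have hg1 := hgh 1 1 rfl
    exact (((hAh.pow 2).mul hg0).sub (((hAh.mul hBh)).mul hg1)).add (hCc2.mul (hBh.pow 2))
  -- expansions
  have hΦexp : Φ = Polynomial.C (f 0) + Polynomial.C (f 1) * Polynomial.X
      + Polynomial.C (f 2) * Polynomial.X ^ 2 + Polynomial.C (f 3) * Polynomial.X ^ 3 := by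
    conv_lhs => rw [Φ.as_sum_range' 4 (lt_of_le_of_lt hΦdeg (by norm_num))]
    simp only [Finset.sum_range_succ, Finset.sum_range_zero, zero_add,
      ← Polynomial.C_mul_X_pow_eq_monomial]
    ring
  have hΨexp : Ψ = Polynomial.C (g 0) + Polynomial.C (g 1) * Polynomial.X
      + Polynomial.C (g 2) * Polynomial.X ^ 2 := by
    conv_lhs => rw [Ψ.as_sum_range' 3 (lt_of_le_of_lt hΨdeg (by norm_num))]
    simp only [Finset.sum_range_succ, Finset.sum_range_zero, zero_add,
      ← Polynomial.C_mul_X_pow_eq_monomial]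
    ring
  set Lp : Polynomial (MvPolynomial (Fin N) F) := Polynomial.C A * Polynomial.X + Polynomial.C B
    with hLpdef
  have E1 : Polynomial.C (C c2) ^ 2 * Φ =
      (Polynomial.C (C c2) * Polynomial.C (C c3) * Polynomial.X
        + (Polynomial.C (C c2) * Polynomial.C (f 2) - Polynomial.C (C c3) * Polynomial.C (g 1)))
        * Ψ + Lp := by
    rw [hΦexp, hΨexp, hf3C, hg2C, hLpdef, hAdef, hBdef]
    simp only [map_add, map_sub, map_mul, map_pow]
    ring
  have E2 : Polynomial.C A ^ 2 * Ψ =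
      (Polynomial.C (C c2) * Polynomial.C A * Polynomial.X
        + (Polynomial.C A * Polynomial.C (g 1) - Polynomial.C (C c2) * Polynomial.C B)) * Lp
        + Polynomial.C R := by
    rw [hΨexp, hg2C, hLpdef, hRdef]
    simp only [map_add, map_sub, map_mul, map_pow]
    ring
  -- transported coprimality
  have hcopS : ∀ r : Polynomial (MvPolynomial (Fin N) F),
      Irreducible r → ¬(r ∣ Φ ∧ r ∣ Ψ) := by
    rintro r hr ⟨hd1, hd2⟩
    refine hcop ((finSuccEquiv F N).symm r) ?_ ⟨?_, ?_⟩
    · have h : Irreducible ((finSuccEquiv F N) ((finSuccEquiv F N).symm r)) := by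
        rwa [AlgEquiv.apply_symm_apply]
      exact (MulEquiv.irreducible_iff (finSuccEquiv F N)).mp h
    · have h := map_dvd ((finSuccEquiv F N).symm) hd1
      rwa [hΦdef, AlgEquiv.symm_apply_apply] at h
    · have h := map_dvd ((finSuccEquiv F N).symm) hd2
      rwa [hΨdef, AlgEquiv.symm_apply_apply] at h
  -- units
  have hunit2 : IsUnit (Polynomial.C (C c2) : Polynomial (MvPolynomial (Fin N) F)) :=
    ((isUnit_iff_ne_zero.mpr hc2ne).map C).map Polynomial.C
  -- R is nonzero
  have hRne : R ≠ 0 := by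
    intro hR0
    rcases eq_or_ne A 0 with hA0 | hAne
    · -- then B = 0 as well, so Lp = 0 and Ψ divides a multiple of Φ
      have hB0 : B = 0 := by
        have hCB : C c2 * B ^ 2 = 0 := by
          have hRB : R = C c2 * B ^ 2 := by rw [hRdef, hA0]; ring
          rw [← hRB, hR0]
        rcases mul_eq_zero.mp hCB with h | h
        · exact absurd h (by simpa [C_eq_zero] using hc2ne)
        · exact pow_eq_zero_iff (n := 2) (by norm_num) |>.mp h
      have hLp0 : Lp = 0 := by rw [hLpdef, hA0, hB0]; simp
      obtain ⟨ℓ, hℓirr, hℓdvd⟩ := WfDvdMonoid.exists_irreducible_factor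
        (fun h => by
          have := Polynomial.natDegree_eq_zero_of_isUnit h
          have h2 : Ψ.natDegree = 2 := le_antisymm hΨdeg
            (Polynomial.le_natDegree_of_ne_zero (by
              rw [show Ψ.coeff 2 = g 2 from rfl, hg2C]
              simpa [C_eq_zero] using hc2ne))
          omega) hΨne
      have hℓprime : Prime ℓ := UniqueFactorizationMonoid.irreducible_iff_prime.mp hℓirr
      have hℓΦ : ℓ ∣ Φ := by
        have hdvd : ℓ ∣ Polynomial.C (C c2) ^ 2 * Φ := by
          rw [E1, hLp0, add_zero]
          exact Dvd.dvd.mul_left hℓdvd _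
        rcases hℓprime.2.2 _ _ hdvd with h | h
        · exact absurd (isUnit_of_dvd_unit h (hunit2.pow 2)) hℓirr.not_isUnit
        · exact h
      exact hcopS ℓ hℓirr ⟨hℓΦ, hℓdvd⟩
    · -- A ≠ 0 : take the primitive part of Lp
      letI : NormalizationMonoid (MvPolynomial (Fin N) F) :=
        UniqueFactorizationMonoid.normalizationMonoid.toNormalizationMonoid
      letI : NormalizedGCDMonoid (MvPolynomial (Fin N) F) :=
        UniqueFactorizationMonoid.toNormalizedGCDMonoid _
      have hLpne : Lp ≠ 0 := fun h => by
        have : Lp.coeff 1 = A := by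
          rw [hLpdef]
          simp
        rw [h] at this
        exact hAne (by simpa using this.symm)
      have hLpnd : Lp.natDegree = 1 := by
        rw [hLpdef]
        exact Polynomial.natDegree_linear hAne
      set ℓ := Lp.primPart with hℓdef
      have hℓprim : ℓ.IsPrimitive := Lp.isPrimitive_primPart
      have hℓnd : ℓ.natDegree = 1 := by rw [hℓdef, Polynomial.natDegree_primPart, hLpnd]
      have hℓne : ℓ ≠ 0 := Lp.primPart_ne_zero
      have hℓdvdLp : ℓ ∣ Lp := Lp.primPart_dvd
      have hℓirr : Irreducible ℓ := by
        constructor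
        · intro hu
          have := Polynomial.natDegree_eq_zero_of_isUnit hu
          omega
        · intro a b hab
          have hane : a ≠ 0 := fun h => hℓne (by rw [hab, h, zero_mul])
          have hbne : b ≠ 0 := fun h => hℓne (by rw [hab, h, mul_zero])
          have hdeg : a.natDegree + b.natDegree = 1 := by
            rw [← Polynomial.natDegree_mul hane hbne, ← hab, hℓnd]
          rcases Nat.add_eq_one_iff.mp hdeg with ⟨ha, _⟩ | ⟨_, hb⟩
          · left
            obtain ⟨a0, rfl⟩ := Polynomial.natDegree_eq_zero.mp ha
            exact (hℓprim a0 ⟨b, hab⟩).map Polynomial.C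
          · right
            obtain ⟨b0, rfl⟩ := Polynomial.natDegree_eq_zero.mp hb
            exact (hℓprim b0 ⟨a, by rw [hab, mul_comm]⟩).map Polynomial.C
      have hℓprime : Prime ℓ := UniqueFactorizationMonoid.irreducible_iff_prime.mp hℓirr
      have hℓΨ : ℓ ∣ Ψ := by
        have hdvd : ℓ ∣ Polynomial.C A ^ 2 * Ψ := by
          rw [E2, hR0, map_zero, add_zero]
          exact (hℓdvdLp.mul_left _)
        rcases hℓprime.2.2 _ _ hdvd with h | h
        · exfalso
          have hne : (Polynomial.C A ^ 2 : Polynomial (MvPolynomial (Fin N) F)) ≠ 0 := by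
            simp [Polynomial.C_eq_zero, hAne]
          have := Polynomial.natDegree_le_of_dvd h hne
          rw [hℓnd] at this
          simp [Polynomial.natDegree_pow] at this
        · exact h
      have hℓΦ : ℓ ∣ Φ := by
        have hdvd : ℓ ∣ Polynomial.C (C c2) ^ 2 * Φ := by
          rw [E1]
          exact dvd_add (hℓΨ.mul_left _) hℓdvdLp
        rcases hℓprime.2.2 _ _ hdvd with h | h
        · exact absurd (isUnit_of_dvd_unit h (hunit2.pow 2)) hℓirr.not_isUnit
        · exact h
      exact hcopS ℓ hℓirr ⟨hℓΦ, hℓΨ⟩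
  -- projection of a common zero kills R
  have hproj : ∀ (a : Fin N → F) (t : F), eval (Fin.cons t a) φ' = 0 →
      eval (Fin.cons t a) ψ' = 0 → eval a R = 0 := by
    intro a t h1 h2
    rw [eval_eq_eval_mv_eval'] at h1 h2
    rw [Polynomial.eval_eq_sum_range' (lt_of_le_of_lt (Polynomial.natDegree_map_le.trans hΦdeg)
      (by norm_num : (3:ℕ) < 4))] at h1
    rw [Polynomial.eval_eq_sum_range' (lt_of_le_of_lt (Polynomial.natDegree_map_le.trans hΨdeg)
      (by norm_num : (2:ℕ) < 3))] at h2
    simp only [Finset.sum_range_succ, Finset.sum_range_zero, zero_add,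
      Polynomial.coeff_map] at h1 h2
    have hf3a : eval a (f 3) = c3 := by rw [hf3C, eval_C]
    have hg2a : eval a (g 2) = c2 := by rw [hg2C, eval_C]
    have e1 : c3 * t ^ 3 + eval a (f 2) * t ^ 2 + eval a (f 1) * t + eval a (f 0) = 0 := by
      rw [← hf3a]
      linear_combination h1
    have e2 : c2 * t ^ 2 + eval a (g 1) * t + eval a (g 0) = 0 := by
      rw [← hg2a]
      linear_combination h2
    have hkey := keyid t (eval a (f 0)) (eval a (f 1)) (eval a (f 2)) c3 c2
      (eval a (g 0)) (eval a (g 1)) e1 e2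
    rw [hRdef, hAdef, hBdef]
    simp only [map_add, map_sub, map_mul, map_pow, eval_C]
    linear_combination hkey
  -- counting
  set Z := (univ.filter fun v : Fin (N + 1) → F => eval v φ' = 0 ∧ eval v ψ' = 0) with hZdef
  set ZR := (univ.filter fun a : Fin N → F => eval a R = 0) with hZRdef
  have hcount : Z.card = ∑ a : Fin N → F, (Z.filter fun v => v ∘ Fin.succ = a).card :=
    Finset.card_eq_sum_card_fiberwise (fun v _ => Finset.mem_univ _)
  have hcons : ∀ (v : Fin (N+1) → F) (a : Fin N → F), v ∘ Fin.succ = a → v = Fin.cons (v 0) a := by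
    intro v a hva
    funext i
    refine Fin.cases rfl (fun j => ?_) i
    rw [Fin.cons_succ, ← hva]
    rfl
  have hfiber2 : ∀ a : Fin N → F, (Z.filter fun v => v ∘ Fin.succ = a).card ≤ 2 := by
    intro a
    have hg2a : eval a (g 2) = c2 := by rw [hg2C, eval_C]
    have hPa : (Polynomial.map (eval a) Ψ) ≠ 0 := by
      intro h
      apply hc2ne
      rw [← hg2a, show eval a (g 2) = (Polynomial.map (eval a) Ψ).coeff 2 from
        (Polynomial.coeff_map _ _).symm, h, Polynomial.coeff_zero]
    have hcard : (Z.filter fun v => v ∘ Fin.succ = a).card ≤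
        (univ.filter fun t : F => (Polynomial.map (eval a) Ψ).eval t = 0).card := by
      apply Finset.card_le_card_of_injOn (fun v => v 0)
      · intro v hv
        simp only [Finset.mem_coe, Finset.mem_filter, Finset.mem_univ, true_and, hZdef] at hv ⊢
        have hv2 := hcons v a hv.2
        rw [← eval_eq_eval_mv_eval', ← hv2]
        exact hv.1.2
      · intro v hv w hw h
        simp only [Finset.coe_filter, Set.mem_setOf_eq] at hv hw
        have h0 : v 0 = w 0 := h
        rw [hcons v a hv.2, hcons w a hw.2, h0]
    refine hcard.trans ((my_uni_count _ hPa).trans ?_)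
    exact Polynomial.natDegree_map_le.trans hΨdeg
  have hfiber0 : ∀ a : Fin N → F, eval a R ≠ 0 →
      (Z.filter fun v => v ∘ Fin.succ = a) = ∅ := by
    intro a ha
    rw [Finset.filter_eq_empty_iff]
    intro v hv hva
    rw [hZdef, Finset.mem_filter] at hv
    apply ha
    have hv2 := hcons v a hva
    exact hproj a (v 0) (by rw [← hv2]; exact hv.2.1) (by rw [← hv2]; exact hv.2.2)
  have hZbound : Z.card ≤ 2 * ZR.card := by
    rw [hcount]
    calc ∑ a : Fin N → F, (Z.filter fun v => v ∘ Fin.succ = a).card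
        ≤ ∑ a : Fin N → F, (if eval a R = 0 then 2 else 0) := by
          refine Finset.sum_le_sum fun a _ => ?_
          by_cases h : eval a R = 0
          · rw [if_pos h]
            exact hfiber2 a
          · rw [if_neg h, hfiber0 a h]
            simp
      _ = ∑ _a ∈ ZR, 2 := (Finset.sum_filter _ _).symm
      _ = 2 * ZR.card := by rw [Finset.sum_const, smul_eq_mul, mul_comm]
  calc Z.card * q ≤ (2 * ZR.card) * q := Nat.mul_le_mul_right _ hZbound
    _ = 2 * (ZR.card * q) := by ring
    _ ≤ 2 * (R.totalDegree * q ^ N) := Nat.mul_le_mul_left _ (my_sz N R hRne)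
    _ ≤ 2 * (6 * q ^ N) := by
        have := hRh.totalDegree_le
        exact Nat.mul_le_mul_left _ (Nat.mul_le_mul_right _ this)
    _ = 12 * q ^ N := by ring

/-- Let `Y ⊆ P^N` over `F_q` be the common zero locus of a nonzero cubic form
`φ` and a nonzero quadratic form `ψ` with no common irreducible factor. Then
`#Y(F_q) ≤ 12·q^(N−1)/(q−1)`. -/
theorem stmt_15 (F : Type) [Field F] [Fintype F] (q N : ℕ)
    (hq : Fintype.card F = q)
    (φ ψ : MvPolynomial (Fin (N + 1)) F) (hφ0 : φ ≠ 0) (hψ0 : ψ ≠ 0)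
    (hφ : φ.IsHomogeneous 3) (hψ : ψ.IsHomogeneous 2)
    (hcop : ∀ r : MvPolynomial (Fin (N + 1)) F, Irreducible r → ¬(r ∣ φ ∧ r ∣ ψ)) :
    (Set.ncard {x : Projectivization F (Fin (N + 1) → F) |
        ∃ (v : Fin (N + 1) → F) (hv : v ≠ 0), x = Projectivization.mk F v hv ∧
          MvPolynomial.eval v φ = 0 ∧ MvPolynomial.eval v ψ = 0} : ℝ)
      ≤ 12 * (q : ℝ) ^ (N - 1) / ((q : ℝ) - 1) := by
  classical
  subst hq
  set q := Fintype.card F with hqdef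
  have hq2 : 2 ≤ q := Fintype.one_lt_card
  set P := {x : Projectivization F (Fin (N + 1) → F) |
      ∃ (v : Fin (N + 1) → F) (hv : v ≠ 0), x = Projectivization.mk F v hv ∧
        MvPolynomial.eval v φ = 0 ∧ MvPolynomial.eval v ψ = 0} with hPdef
  set Zfin := (univ.filter fun v : Fin (N + 1) → F =>
    v ≠ 0 ∧ eval v φ = 0 ∧ eval v ψ = 0) with hZfindef
  -- Step 2 : affine bound
  have hZ : Zfin.card * q ≤ 12 * q ^ N := by
    rcases le_or_gt (2 * q) 12 with hle | hgt
    · -- small q : use only ψ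
      have hsub : Zfin ⊆ univ.filter fun v : Fin (N + 1) → F => eval v ψ = 0 := by
        intro v hv
        rw [hZfindef, Finset.mem_filter] at hv
        exact Finset.mem_filter.mpr ⟨Finset.mem_univ _, hv.2.2.2⟩
      calc Zfin.card * q ≤ (univ.filter fun v : Fin (N + 1) → F => eval v ψ = 0).card * q :=
            Nat.mul_le_mul_right _ (Finset.card_le_card hsub)
        _ ≤ ψ.totalDegree * q ^ (N + 1) := my_sz (N + 1) ψ hψ0
        _ = 2 * q ^ (N + 1) := by rw [hψ.totalDegree hψ0]
        _ = (2 * q) * q ^ N := by ring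
        _ ≤ 12 * q ^ N := Nat.mul_le_mul_right _ hle
    · -- large q : find a good point and change coordinates
      have hex : ∃ w : Fin (N + 1) → F, eval w (φ * ψ) ≠ 0 := by
        by_contra h
        push_neg at h
        have h5 : (φ * ψ).IsHomogeneous 5 := hφ.mul hψ
        have : φ * ψ = 0 := by
          refine h5.eq_zero_of_forall_eval_eq_zero_of_le_card h ?_
          rw [Cardinal.mk_fintype]
          have : (5 : ℕ) ≤ q := by omega
          exact_mod_cast this
        exact mul_ne_zero hφ0 hψ0 this
      obtain ⟨w, hw⟩ := hex
      rw [map_mul] at hw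
      have hwφ : eval w φ ≠ 0 := fun h => hw (by rw [h, zero_mul])
      have hwψ : eval w ψ ≠ 0 := fun h => hw (by rw [h, mul_zero])
      have hw0 : w ≠ 0 := by
        rintro rfl
        apply hwφ
        rw [show (0 : Fin (N + 1) → F) = fun _ => (0 : F) from rfl, eval_zero']
        exact hφ.coeff_eq_zero (by simp)
      obtain ⟨L, hL⟩ := exists_linEquiv_single_eq w hw0
      have hcons0 : (Fin.cons 1 0 : Fin (N + 1) → F) = Pi.single 0 1 := by
        funext i
        refine Fin.cases ?_ (fun j => ?_) i
        · simp
        · simp [Pi.single_apply, Fin.succ_ne_zero]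
      set E := substEquiv L with hEdef
      set φ'' := E φ with hφ''def
      set ψ'' := E ψ with hψ''def
      have hφh'' : φ''.IsHomogeneous 3 := substEquiv_isHomogeneous L hφ
      have hψh'' : ψ''.IsHomogeneous 2 := substEquiv_isHomogeneous L hψ
      have hcop'' : ∀ r : MvPolynomial (Fin (N + 1)) F,
          Irreducible r → ¬(r ∣ φ'' ∧ r ∣ ψ'') := by
        rintro r hr ⟨h1, h2⟩
        refine hcop (E.symm r) ?_ ⟨?_, ?_⟩
        · have h : Irreducible (E (E.symm r)) := by rwa [AlgEquiv.apply_symm_apply]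
          exact (MulEquiv.irreducible_iff E).mp h
        · have h := map_dvd E.symm h1
          rwa [hφ''def, AlgEquiv.symm_apply_apply] at h
        · have h := map_dvd E.symm h2
          rwa [hψ''def, AlgEquiv.symm_apply_apply] at h
      have hφw'' : eval (Fin.cons 1 0 : Fin (N + 1) → F) φ'' ≠ 0 := by
        rw [hφ''def, hEdef, substEquiv_eval, hcons0, hL]
        exact hwφ
      have hψw'' : eval (Fin.cons 1 0 : Fin (N + 1) → F) ψ'' ≠ 0 := by
        rw [hψ''def, hEdef, substEquiv_eval, hcons0, hL]
        exact hwψ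
      have hcore := core φ'' ψ'' hφh'' hψh'' hcop'' hφw'' hψw''
      -- compare the two zero sets
      have hsub : Zfin ⊆ univ.filter fun v : Fin (N + 1) → F =>
          eval v φ = 0 ∧ eval v ψ = 0 := by
        intro v hv
        rw [hZfindef, Finset.mem_filter] at hv
        exact Finset.mem_filter.mpr ⟨Finset.mem_univ _, hv.2.2⟩
      have hbij : (univ.filter fun v : Fin (N + 1) → F =>
          eval v φ = 0 ∧ eval v ψ = 0).card =
          (univ.filter fun v : Fin (N + 1) → F => eval v φ'' = 0 ∧ eval v ψ'' = 0).card := by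
        apply Finset.card_bij (fun v _ => L.symm v)
        · intro v hv
          rw [Finset.mem_filter] at hv ⊢
          refine ⟨Finset.mem_univ _, ?_, ?_⟩
          · rw [hφ''def, hEdef, substEquiv_eval, LinearEquiv.apply_symm_apply]
            exact hv.2.1
          · rw [hψ''def, hEdef, substEquiv_eval, LinearEquiv.apply_symm_apply]
            exact hv.2.2
        · intro v hv v' hv' h
          exact L.symm.injective h
        · intro v hv
          refine ⟨L v, ?_, by rw [LinearEquiv.symm_apply_apply]⟩
          rw [Finset.mem_filter] at hv ⊢
          refine ⟨Finset.mem_univ _, ?_, ?_⟩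
          · have := hv.2.1
            rwa [hφ''def, hEdef, substEquiv_eval] at this
          · have := hv.2.2
            rwa [hψ''def, hEdef, substEquiv_eval] at this
      calc Zfin.card * q
          ≤ (univ.filter fun v : Fin (N + 1) → F =>
              eval v φ = 0 ∧ eval v ψ = 0).card * q :=
            Nat.mul_le_mul_right _ (Finset.card_le_card hsub)
        _ = (univ.filter fun v : Fin (N + 1) → F =>
              eval v φ'' = 0 ∧ eval v ψ'' = 0).card * q := by rw [hbij]
        _ ≤ 12 * q ^ N := hcore
  -- Step 1 : projective vs affine count
  haveI hnonempty : Nonempty (Projectivization F (Fin (N + 1) → F)) := by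
    refine ⟨Projectivization.mk F (fun _ => 1) ?_⟩
    intro h
    have := congrFun h 0
    simp at this
  set mkf : (Fin (N + 1) → F) → Projectivization F (Fin (N + 1) → F) :=
    fun v => if h : v ≠ 0 then Projectivization.mk F v h else Classical.arbitrary _ with hmkfdef
  have hPeq : P = ↑(Zfin.image mkf) := by
    ext x
    constructor
    · rintro ⟨v, hv, hx, h1, h2⟩
      rw [Finset.coe_image, Set.mem_image]
      refine ⟨v, by simp [hZfindef, hv, h1, h2], ?_⟩
      rw [hmkfdef]
      simp only [dif_pos hv]
      exact hx.symm
    · intro hx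
      rw [Finset.coe_image, Set.mem_image] at hx
      obtain ⟨v, hvmem, hmk⟩ := hx
      simp only [hZfindef, Finset.coe_filter, Set.mem_setOf_eq, Finset.mem_univ,
        true_and] at hvmem
      refine ⟨v, hvmem.1, ?_, hvmem.2.1, hvmem.2.2⟩
      rw [hmkfdef] at hmk
      simp only [dif_pos hvmem.1] at hmk
      exact hmk.symm
  have hncard : P.ncard = (Zfin.image mkf).card := by rw [hPeq, Set.ncard_coe_finset]
  have hstep1 : (q - 1) * P.ncard ≤ Zfin.card := by
    rw [hncard]
    apply Finset.mul_card_image_le_card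
    intro b hb
    obtain ⟨v₀, hv₀mem, rfl⟩ := Finset.mem_image.mp hb
    have hv₀ := Finset.mem_filter.mp hv₀mem
    have hv₀ne : v₀ ≠ 0 := hv₀.2.1
    have hcard_erase : (univ.erase (0 : F)).card = q - 1 := by
      rw [Finset.card_erase_of_mem (Finset.mem_univ _), Finset.card_univ]
    rw [← hcard_erase]
    apply Finset.card_le_card_of_injOn (fun c => c • v₀)
    · intro c hc
      have hcne : c ≠ 0 := Finset.ne_of_mem_erase hc
      have hsmulne : c • v₀ ≠ 0 := smul_ne_zero hcne hv₀ne
      rw [Finset.mem_coe, Finset.mem_filter]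
      refine ⟨Finset.mem_filter.mpr ⟨Finset.mem_univ _, hsmulne, ?_, ?_⟩, ?_⟩
      · rw [my_eval_smul hφ c v₀, hv₀.2.2.1, mul_zero]
      · rw [my_eval_smul hψ c v₀, hv₀.2.2.2, mul_zero]
      · show mkf (c • v₀) = mkf v₀
        rw [hmkfdef]
        simp only [dif_pos hsmulne, dif_pos hv₀ne]
        rw [Projectivization.mk_eq_mk_iff']
        exact ⟨c, rfl⟩
    · intro c₁ hc₁ c₂ hc₂ h
      obtain ⟨j, hj⟩ := Function.ne_iff.mp hv₀ne
      have hj' : v₀ j ≠ 0 := by simpa using hj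
      have := congrFun h j
      simp only [Pi.smul_apply, smul_eq_mul] at this
      exact mul_right_cancel₀ hj' this
  -- combine into the natural number bound
  have hfinal : (q - 1) * P.ncard ≤ 12 * q ^ (N - 1) := by
    rcases Nat.eq_zero_or_pos N with rfl | hN
    · -- N = 0
      have h1 : Zfin.card * q ≤ 12 * q ^ 0 := hZ
      rw [pow_zero, mul_one] at h1
      have h2 : Zfin.card ≤ 12 := by
        calc Zfin.card ≤ Zfin.card * q := Nat.le_mul_of_pos_right _ (by omega)
          _ ≤ 12 := h1
      calc (q - 1) * P.ncard ≤ Zfin.card := hstep1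
        _ ≤ 12 := h2
        _ = 12 * q ^ (0 - 1) := by norm_num
    · have hNq : q ^ N = q ^ (N - 1) * q := by
        rw [← pow_succ]
        congr 1
        omega
      refine Nat.le_of_mul_le_mul_right ?_ (by omega : 0 < q)
      calc (q - 1) * P.ncard * q ≤ Zfin.card * q := Nat.mul_le_mul_right _ hstep1
        _ ≤ 12 * q ^ N := hZ
        _ = 12 * q ^ (N - 1) * q := by rw [hNq]; ring
  -- pass to the reals
  have hqpos : (0 : ℝ) < (q : ℝ) - 1 := by
    have : (2 : ℝ) ≤ (q : ℝ) := by exact_mod_cast hq2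
    linarith
  rw [le_div_iff₀ hqpos]
  calc (P.ncard : ℝ) * ((q : ℝ) - 1) = (((q - 1) * P.ncard : ℕ) : ℝ) := by
        rw [Nat.cast_mul, Nat.cast_sub (by omega : 1 ≤ q)]
        push_cast
        ring
    _ ≤ ((12 * q ^ (N - 1) : ℕ) : ℝ) := Nat.cast_le.mpr hfinal
    _ = 12 * (q : ℝ) ^ (N - 1) := by push_cast; ring
end
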